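/- arXiv:2512.13872 — 4 statements merged into one kernel-verified Lean document; each statement's English description precedes it below -/
import Mathlib

section
/- Let μ be a probability measure on [0,1], η₀ : [0,1] → [0,1] measurable, and for s ∈ [0,1] let w_s be the probability measure with density proportional to (1/Z(u,h))·sech((s-u)/h) with respect to μ. Define η(s) = E_{w_s}[η₀]. Then η is differentiable and η'(s) = (1/h)·Cov_{w_s}(η₀(S), tanh((S - s)/h)). -/
open Real MeasureTheory

/-- Sech kernel normalization constant `Z(u,h) = ∫₀¹ sech((t-u)/h) dt`. -/
noncomputable def Zker (u h : ℝ) : ℝ := ∫ t in (0:ℝ)..1, 1 / Real.cosh ((t - u) / h)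

/-- Unnormalized kernel weight `(1/Z(u,h))·sech((s-u)/h)`. -/
noncomputable def kerW (h s u : ℝ) : ℝ := (1 / Zker u h) * (1 / Real.cosh ((s - u) / h))

/-- Denominator `D(s) = ∫ (1/Z(u,h))·sech((s-u)/h) dμ(u)`. -/
noncomputable def Dfun (μ : Measure ℝ) (h s : ℝ) : ℝ := ∫ u, kerW h s u ∂μ

/-- Expectation of `A` under the reweighted measure `w_s` (density `kerW h s / D(s)` w.r.t. μ). -/
noncomputable def wExp (μ : Measure ℝ) (h s : ℝ) (A : ℝ → ℝ) : ℝ :=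
  (∫ u, A u * kerW h s u ∂μ) / Dfun μ h s

/-- Covariance of `A` and `B` under `w_s`. -/
noncomputable def wCov (μ : Measure ℝ) (h s : ℝ) (A B : ℝ → ℝ) : ℝ :=
  wExp μ h s (fun u => A u * B u) - wExp μ h s A * wExp μ h s B


/-! The numerator `N(s) = ∫ η₀ · kerW h s` and the denominator `D(s)` of `wExp` may both be
differentiated under the integral sign: `∂ₛ sech((s - u)/h) = h⁻¹ tanh((u - s)/h) sech((s - u)/h)`
is dominated by `1/h`, and on `[0, 1]` the normaliser satisfies `Z(u, h) ≥ sech(1/h)`, so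
`1 / Z` is bounded. The quotient rule `(N/D)' = N'/D - (N/D)(D'/D)` is then exactly
`h⁻¹ · Cov_{w_s}(η₀, tanh((· - s)/h))`. -/

open Filter Set

lemma Real.continuous_tanh : Continuous tanh := by
  rw [show tanh = fun x => sinh x / cosh x from funext tanh_eq_sinh_div_cosh]
  exact continuous_sinh.div continuous_cosh fun x => (cosh_pos x).ne'

lemma Continuous.one_div_cosh {α : Type*} [TopologicalSpace α] {f : α → ℝ} (hf : Continuous f) :
    Continuous fun a => 1 / cosh (f a) :=
  continuous_const.div (continuous_cosh.comp hf) fun _ => (cosh_pos _).ne'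

lemma Real.one_div_cosh_le_one (x : ℝ) : 1 / cosh x ≤ 1 :=
  (div_le_one (cosh_pos x)).2 (one_le_cosh x)

lemma continuous_one_div_cosh_sub_div (x h : ℝ) :
    Continuous fun u : ℝ => 1 / cosh ((x - u) / h) :=
  ((continuous_const.sub continuous_id).div_const h).one_div_cosh

lemma hasDerivAt_one_div_cosh_sub_div (u h x : ℝ) :
    HasDerivAt (fun y => 1 / cosh ((y - u) / h))
      (h⁻¹ * tanh ((u - x) / h) * (1 / cosh ((x - u) / h))) x := by
  have hlin : HasDerivAt (fun y : ℝ => (y - u) / h) h⁻¹ x := by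
    simpa using ((hasDerivAt_id x).sub_const u).div_const h
  have := ((hasDerivAt_cosh _).comp x hlin).fun_inv (cosh_pos _).ne'
  simp only [Function.comp_def, ← one_div] at this
  refine this.congr_deriv ?_
  rw [show (u - x) / h = -((x - u) / h) by ring, tanh_neg, tanh_eq_sinh_div_cosh]
  field_simp

theorem hasDerivAt_integral_mul_one_div_cosh {μ : Measure ℝ} {a : ℝ → ℝ} (ha : Integrable a μ)
    (h s : ℝ) :
    HasDerivAt (fun x => ∫ u, a u * (1 / cosh ((x - u) / h)) ∂μ)
      (h⁻¹ * ∫ u, a u * tanh ((u - s) / h) * (1 / cosh ((s - u) / h)) ∂μ) s := by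
  have hF_int : Integrable (fun u => a u * (1 / cosh ((s - u) / h))) μ :=
    ha.mul_bdd (continuous_one_div_cosh_sub_div s h).aestronglyMeasurable <| ae_of_all _ fun u => by
      rw [Real.norm_eq_abs, abs_of_pos (by positivity)]
      exact one_div_cosh_le_one _
  rw [← integral_const_mul]
  refine (hasDerivAt_integral_of_dominated_loc_of_deriv_le (bound := fun u => |h⁻¹| * |a u|)
    (F' := fun x u => h⁻¹ * (a u * tanh ((u - x) / h) * (1 / cosh ((x - u) / h))))
    univ_mem (Eventually.of_forall fun x =>
      ha.aestronglyMeasurable.mul (continuous_one_div_cosh_sub_div x h).aestronglyMeasurable)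
    hF_int ?_ ?_ (ha.abs.const_mul _) ?_).2
  · have htanh_cont : Continuous fun u => tanh ((u - s) / h) :=
      Real.continuous_tanh.comp (by fun_prop)
    exact ((ha.aestronglyMeasurable.mul htanh_cont.aestronglyMeasurable).mul
      (continuous_one_div_cosh_sub_div s h).aestronglyMeasurable).const_mul h⁻¹
  · refine ae_of_all _ fun u x _ => ?_
    have htanh := (abs_tanh_lt_one ((u - x) / h)).le
    have hsech := one_div_cosh_le_one ((x - u) / h)
    have hsech_pos : 0 < 1 / cosh ((x - u) / h) := by positivity
    rw [Real.norm_eq_abs, abs_mul, abs_mul, abs_mul, abs_of_pos hsech_pos]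
    calc |h⁻¹| * (|a u| * |tanh ((u - x) / h)| * (1 / cosh ((x - u) / h)))
        ≤ |h⁻¹| * (|a u| * 1 * 1) := by gcongr
      _ = |h⁻¹| * |a u| := by ring
  · refine ae_of_all _ fun u x _ => ?_
    refine ((hasDerivAt_one_div_cosh_sub_div u h x).const_mul (a u)).congr_deriv ?_
    ring

lemma continuous_Zker (h : ℝ) : Continuous fun u => Zker u h :=
  intervalIntegral.continuous_parametric_intervalIntegral_of_continuous'
    ((continuous_snd.sub continuous_fst).div_const h).one_div_cosh 0 1

lemma one_div_cosh_one_div_le_Zker {h u : ℝ} (hh : 0 < h) (hu : u ∈ Icc (0 : ℝ) 1) :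
    1 / cosh (1 / h) ≤ Zker u h := by
  have hcont : Continuous fun t : ℝ => 1 / cosh ((t - u) / h) :=
    ((continuous_id.sub continuous_const).div_const h).one_div_cosh
  calc 1 / cosh (1 / h) = ∫ _ in (0 : ℝ)..1, 1 / cosh (1 / h) := by simp
    _ ≤ Zker u h := by
      refine intervalIntegral.integral_mono_on zero_le_one intervalIntegrable_const
        (hcont.intervalIntegrable 0 1) fun t ht => ?_
      gcongr 1 / ?_
      rw [cosh_le_cosh, abs_div, abs_div, abs_of_pos hh, abs_one]
      gcongr
      exact abs_le.2 ⟨by linarith [ht.1, hu.2], by linarith [ht.2, hu.1]⟩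

lemma Zker_pos {h u : ℝ} (hh : 0 < h) (hu : u ∈ Icc (0 : ℝ) 1) : 0 < Zker u h :=
  (by positivity : (0 : ℝ) < 1 / cosh (1 / h)).trans_le (one_div_cosh_one_div_le_Zker hh hu)

lemma integrable_div_Zker {μ : Measure ℝ} {c : ℝ → ℝ} {h : ℝ} (hh : 0 < h)
    (hμ : ∀ᵐ u ∂μ, u ∈ Icc (0 : ℝ) 1) (hc : Integrable c μ) :
    Integrable (fun u => c u / Zker u h) μ := by
  refine hc.mul_bdd (c := cosh (1 / h)) (continuous_Zker h).measurable.inv.aestronglyMeasurable ?_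
  filter_upwards [hμ] with u hu
  have hZ := Zker_pos hh hu
  rw [norm_inv, Real.norm_eq_abs, abs_of_pos hZ, inv_le_comm₀ hZ (cosh_pos _), inv_eq_one_div]
  exact one_div_cosh_one_div_le_Zker hh hu

lemma integrable_mul_kerW {μ : Measure ℝ} {c : ℝ → ℝ} {h : ℝ}
    (hc : Integrable (fun u => c u / Zker u h) μ) (x : ℝ) :
    Integrable (fun u => c u * kerW h x u) μ := by
  refine (hc.mul_bdd (c := 1) (continuous_one_div_cosh_sub_div x h).aestronglyMeasurable
    (ae_of_all _ fun u => ?_)).congr (ae_of_all _ fun u => ?_)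
  · rw [Real.norm_eq_abs, abs_of_pos (by positivity)]
    exact one_div_cosh_le_one ((x - u) / h)
  · simp only [kerW]; ring

lemma hasDerivAt_integral_mul_kerW {μ : Measure ℝ} {c : ℝ → ℝ} {h : ℝ}
    (hc : Integrable (fun u => c u / Zker u h) μ) (s : ℝ) :
    HasDerivAt (fun x => ∫ u, c u * kerW h x u ∂μ)
      (h⁻¹ * ∫ u, c u * tanh ((u - s) / h) * kerW h s u ∂μ) s := by
  convert hasDerivAt_integral_mul_one_div_cosh hc h s using 1
  · ext x; congr 1; ext u; rw [kerW]; ring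
  · congr 2; ext u; rw [kerW]; ring

lemma Dfun_pos {μ : Measure ℝ} [IsFiniteMeasure μ] [NeZero μ] {h : ℝ} (hh : 0 < h)
    (hμ : ∀ᵐ u ∂μ, u ∈ Icc (0 : ℝ) 1) (s : ℝ) : 0 < Dfun μ h s := by
  have hpos : ∀ᵐ u ∂μ, 0 < kerW h s u := by
    filter_upwards [hμ] with u hu
    have := Zker_pos hh hu
    rw [kerW]; positivity
  have hint : Integrable (kerW h s) μ := by
    simpa using integrable_mul_kerW (integrable_div_Zker hh hμ (integrable_const 1)) s
  rw [Dfun, integral_pos_iff_support_of_nonneg_ae (hpos.mono fun _ hu => hu.le) hint,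
    pos_iff_ne_zero]
  intro hzero
  obtain ⟨u, hu, hu0⟩ := (hpos.and ((Measure.measure_support_eq_zero_iff μ).1 hzero)).exists
  exact hu.ne' hu0

theorem perturbed_calibration_deriv_general
    (μ : Measure ℝ) [IsProbabilityMeasure μ] (hsupp : μ (Set.Icc (0:ℝ) 1) = 1)
    (η₀ : ℝ → ℝ) (hη₀meas : Measurable η₀) (hη₀b : ∀ u ∈ Set.Icc (0:ℝ) 1, η₀ u ∈ Set.Icc (0:ℝ) 1)
    (h : ℝ) (hh : 0 < h) (s : ℝ) :
    HasDerivAt (fun s' => wExp μ h s' η₀)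
      ((1 / h) * wCov μ h s η₀ (fun u => Real.tanh ((u - s) / h))) s := by
  have hμ : ∀ᵐ u ∂μ, u ∈ Icc (0 : ℝ) 1 := (mem_ae_iff_prob_eq_one measurableSet_Icc).2 hsupp
  have hη₀int : Integrable η₀ μ := Integrable.of_bound hη₀meas.aestronglyMeasurable 1 <| by
    filter_upwards [hμ] with u hu
    exact abs_le.2 ⟨by linarith [(hη₀b u hu).1], (hη₀b u hu).2⟩
  have hnum := hasDerivAt_integral_mul_kerW (integrable_div_Zker hh hμ hη₀int) s
  have hden := hasDerivAt_integral_mul_kerW (integrable_div_Zker hh hμ (integrable_const 1)) s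
  simp only [one_mul] at hden
  refine (hnum.fun_div hden (Dfun_pos hh hμ s).ne').congr_deriv ?_
  simp only [wCov, wExp, Dfun]
  field_simp

theorem perturbed_calibration_deriv
    (μ : Measure ℝ) [IsProbabilityMeasure μ] (hsupp : μ (Set.Icc (0:ℝ) 1) = 1)
    (η₀ : ℝ → ℝ) (hη₀meas : Measurable η₀) (hη₀b : ∀ u ∈ Set.Icc (0:ℝ) 1, η₀ u ∈ Set.Icc (0:ℝ) 1)
    (h : ℝ) (hh : 0 < h) (s : ℝ) (hs : s ∈ Set.Icc (0:ℝ) 1) :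
    HasDerivAt (fun s' => wExp μ h s' η₀)
      ((1 / h) * wCov μ h s η₀ (fun u => Real.tanh ((u - s) / h))) s :=
  perturbed_calibration_deriv_general μ hsupp η₀ hη₀meas hη₀b h hh s
end

section
/- Let D be the (n-1)×n forward-difference matrix with (Dv)_i = v_{i+1} - v_i. Then the (i,j) entry of (DDᵀ)⁻¹ equals min(i,j)·(n - max(i,j))/n, for 1 ≤ i,j ≤ n-1. -/
open Matrix

/-- Forward-difference matrix: `(D v)_i = v_{i+1} - v_i`. -/
def diffMat (n : ℕ) : Matrix (Fin (n - 1)) (Fin n) ℝ :=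
  fun i j => if (j : ℕ) = (i : ℕ) + 1 then 1 else if (j : ℕ) = (i : ℕ) then -1 else 0

/-- The candidate inverse entry, as a function of naturals. -/
noncomputable def Hf (n b a : ℕ) : ℝ :=
  ((min a b : ℕ) : ℝ) * ((n : ℝ) - ((max a b : ℕ) : ℝ)) / n

/-- The candidate inverse matrix. -/
noncomputable def Bmat (n : ℕ) : Matrix (Fin (n - 1)) (Fin (n - 1)) ℝ :=
  fun i j => Hf n ((j : ℕ) + 1) ((i : ℕ) + 1)

lemma sum_fin_ite (m c : ℕ) (g : ℕ → ℝ) :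
    (∑ k : Fin m, if (k : ℕ) = c then g (k : ℕ) else 0)
      = if c < m then g c else 0 := by
  by_cases h : c < m
  · rw [if_pos h, Finset.sum_eq_single (⟨c, h⟩ : Fin m)]
    · simp
    · intro k _ hk
      rw [if_neg]
      intro hkc
      exact hk (Fin.ext hkc)
    · simp
  · rw [if_neg h]
    apply Finset.sum_eq_zero
    intro k _
    rw [if_neg]
    have := k.isLt
    omega

lemma diff_gram (n : ℕ) (i k : Fin (n - 1)) :
    (diffMat n * (diffMat n)ᵀ) i k
      = (if (k : ℕ) = (i : ℕ) then 2 else 0)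
        - (if (k : ℕ) = (i : ℕ) + 1 then 1 else 0)
        - (if (k : ℕ) + 1 = (i : ℕ) then 1 else 0) := by
  have hi : (i : ℕ) < n - 1 := i.isLt
  have hk : (k : ℕ) < n - 1 := k.isLt
  have hip1 : (i : ℕ) + 1 < n := by omega
  have hii : (i : ℕ) < n := by omega
  set ip1 : Fin n := ⟨(i : ℕ) + 1, hip1⟩ with hip1d
  set ii : Fin n := ⟨(i : ℕ), hii⟩ with hiid
  rw [mul_apply]
  have step : ∀ l : Fin n, diffMat n i l * (diffMat n)ᵀ l k
      = (if l = ip1 then (diffMat n)ᵀ l k else 0)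
        - (if l = ii then (diffMat n)ᵀ l k else 0) := by
    intro l
    have h1 : (l = ip1) ↔ ((l : ℕ) = (i : ℕ) + 1) := by
      rw [Fin.ext_iff]
    have h2 : (l = ii) ↔ ((l : ℕ) = (i : ℕ)) := by
      rw [Fin.ext_iff]
    simp only [diffMat, transpose_apply, h1, h2]
    split_ifs <;> first | (exfalso; omega) | ring
  simp only [step]
  rw [Finset.sum_sub_distrib, Finset.sum_ite_eq' Finset.univ ip1,
    Finset.sum_ite_eq' Finset.univ ii]
  simp only [Finset.mem_univ, if_pos, transpose_apply, diffMat, hip1d, hiid]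
  split_ifs <;> first | (exfalso; omega) | norm_num
  
lemma key (n a b : ℕ) (hn : 2 ≤ n) (ha1 : 1 ≤ a) (han : a ≤ n - 1)
    (hb1 : 1 ≤ b) (hbn : b ≤ n - 1) :
    2 * Hf n b a - Hf n b (a + 1) - Hf n b (a - 1)
      = if a = b then 1 else 0 := by
  have hn0 : (n : ℝ) ≠ 0 := by positivity
  have hcast : ((a - 1 : ℕ) : ℝ) = (a : ℝ) - 1 := by
    rw [Nat.cast_sub ha1, Nat.cast_one]
  rcases lt_trichotomy a b with h | h | h
  · rw [if_neg (by omega)]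
    simp only [Hf]
    rw [min_eq_left (by omega), max_eq_right (by omega),
      min_eq_left (by omega), max_eq_right (by omega),
      min_eq_left (by omega), max_eq_right (by omega)]
    rw [hcast]
    push_cast
    field_simp
    ring
  · rw [if_pos h]
    subst h
    simp only [Hf]
    rw [min_self, max_self,
      min_eq_right (by omega), max_eq_left (by omega),
      min_eq_left (by omega), max_eq_right (by omega)]
    rw [hcast]
    push_cast
    field_simp
    ring
  · rw [if_neg (by omega)]
    simp only [Hf]
    rw [min_eq_right (by omega), max_eq_left (by omega),
      min_eq_right (by omega), max_eq_left (by omega),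
      min_eq_right (by omega), max_eq_left (by omega)]
    rw [hcast]
    push_cast
    field_simp
    ring

lemma Hf_zero (n b : ℕ) : Hf n b 0 = 0 := by
  simp [Hf]

lemma Hf_top (n b : ℕ) (hb : b ≤ n) : Hf n b n = 0 := by
  simp only [Hf, min_eq_right hb, max_eq_left hb, sub_self, mul_zero, zero_div]

lemma gram_mul_B (n : ℕ) (hn : 2 ≤ n) :
    diffMat n * (diffMat n)ᵀ * Bmat n = 1 := by
  ext i j
  rw [mul_apply]
  have hi : (i : ℕ) < n - 1 := i.isLt
  have hj : (j : ℕ) < n - 1 := j.isLt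
  simp only [diff_gram, Bmat, sub_mul]
  rw [Finset.sum_sub_distrib, Finset.sum_sub_distrib]
  have e1 : (∑ k : Fin (n-1), (if (k : ℕ) = (i : ℕ) then (2:ℝ) else 0) * Hf n ((j:ℕ)+1) ((k:ℕ)+1))
      = 2 * Hf n ((j:ℕ)+1) ((i:ℕ)+1) := by
    have := sum_fin_ite (n-1) (i : ℕ) (fun a => 2 * Hf n ((j:ℕ)+1) (a+1))
    rw [if_pos hi] at this
    rw [← this]
    apply Finset.sum_congr rfl
    intro k _
    split_ifs <;> ring
  have e2 : (∑ k : Fin (n-1), (if (k : ℕ) = (i : ℕ) + 1 then (1:ℝ) else 0) * Hf n ((j:ℕ)+1) ((k:ℕ)+1))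
      = Hf n ((j:ℕ)+1) ((i:ℕ)+2) := by
    have h := sum_fin_ite (n-1) ((i : ℕ)+1) (fun a => Hf n ((j:ℕ)+1) (a+1))
    have hsum : (∑ k : Fin (n-1), (if (k : ℕ) = (i : ℕ) + 1 then (1:ℝ) else 0) * Hf n ((j:ℕ)+1) ((k:ℕ)+1))
        = (∑ k : Fin (n-1), if (k : ℕ) = (i : ℕ) + 1 then Hf n ((j:ℕ)+1) ((k:ℕ)+1) else 0) := by
      apply Finset.sum_congr rfl
      intro k _
      split_ifs <;> ring
    rw [hsum, h]
    by_cases hc : (i : ℕ) + 1 < n - 1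
    · rw [if_pos hc]
    · rw [if_neg hc]
      have : (i : ℕ) + 2 = n := by omega
      rw [this, Hf_top n _ (by omega)]
  have e3 : (∑ k : Fin (n-1), (if (k : ℕ) + 1 = (i : ℕ) then (1:ℝ) else 0) * Hf n ((j:ℕ)+1) ((k:ℕ)+1))
      = Hf n ((j:ℕ)+1) (i : ℕ) := by
    by_cases hi0 : (i : ℕ) = 0
    · rw [hi0, Hf_zero]
      apply Finset.sum_eq_zero
      intro k _
      rw [if_neg (by omega), zero_mul]
    · obtain ⟨c, hc⟩ : ∃ c, (i : ℕ) = c + 1 := ⟨(i:ℕ) - 1, by omega⟩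
      have h := sum_fin_ite (n-1) c (fun a => Hf n ((j:ℕ)+1) (a+1))
      rw [if_pos (by omega)] at h
      have hsum : (∑ k : Fin (n-1), (if (k : ℕ) + 1 = (i : ℕ) then (1:ℝ) else 0) * Hf n ((j:ℕ)+1) ((k:ℕ)+1))
          = (∑ k : Fin (n-1), if (k : ℕ) = c then Hf n ((j:ℕ)+1) ((k:ℕ)+1) else 0) := by
        apply Finset.sum_congr rfl
        intro k _
        have : ((k : ℕ) + 1 = (i : ℕ)) ↔ ((k : ℕ) = c) := by omega
        simp only [this]
        split_ifs <;> ring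
      rw [hsum, h, hc]
  rw [e1, e2, e3]
  have hkey := key n ((i:ℕ)+1) ((j:ℕ)+1) hn (by omega) (by omega) (by omega) (by omega)
  have harg : (i : ℕ) + 1 + 1 = (i : ℕ) + 2 := rfl
  have harg2 : (i : ℕ) + 1 - 1 = (i : ℕ) := rfl
  rw [harg, harg2] at hkey
  rw [hkey]
  simp only [Matrix.one_apply, Fin.ext_iff]
  split_ifs <;> first | rfl | omega

theorem diffMat_gram_inv_entry (n : ℕ) (hn : 2 ≤ n) (i j : Fin (n - 1)) :
    (diffMat n * (diffMat n)ᵀ)⁻¹ i j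
      = (min ((i : ℕ) + 1) ((j : ℕ) + 1) : ℝ)
          * ((n : ℝ) - (max ((i : ℕ) + 1) ((j : ℕ) + 1) : ℕ)) / n := by
  have h := inv_eq_right_inv (gram_mul_B n hn)
  rw [h]
  simp only [Bmat, Hf]
  push_cast
  rw [min_comm, max_comm]
end

section
/- Let D be the (n-1)×n forward-difference matrix with (Dv)_i = v_{i+1} - v_i and let D⁺ be its Moore-Penrose pseudo-inverse. Then every row of (D⁺)ᵀ has squared Euclidean norm at most n/4. -/
/-!
The row norms can be computed exactly once `D⁺` is known in closed form. The candidate `P` with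
(0-indexed) `P_{kj} = (j+1)/n - [k ≤ j]` is a right inverse of `D`, and `P D = I - J/n` is
symmetric; these two Penrose conditions force `P = Dᵀ (D Dᵀ)⁻¹`. Row `j` of `Pᵀ` has `j+1` entries `(j+1-n)/n` and
`n-j-1` entries `(j+1)/n`, so its squared norm is `x (n - x) / n` with `x = j + 1`, which is at
most `n/4` by AM-GM.
-/

open Matrix

/-- Moore–Penrose pseudo-inverse of the full-row-rank matrix `D`: `D⁺ = Dᵀ (D Dᵀ)⁻¹`. -/
noncomputable def diffMatPinv (n : ℕ) : Matrix (Fin n) (Fin (n - 1)) ℝ :=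
  (diffMat n)ᵀ * (diffMat n * (diffMat n)ᵀ)⁻¹

open Finset

theorem Matrix.transpose_mul_inv_mul_transpose_eq_of_mul_eq_one {m n R : Type*} [Fintype m]
    [DecidableEq m] [Fintype n] [CommRing R] {A : Matrix m n R} {Q : Matrix n m R}
    (hAQ : A * Q = 1) (hQA : (Q * A)ᵀ = Q * A) : Aᵀ * (A * Aᵀ)⁻¹ = Q := by
  -- `(A Aᵀ)⁻¹ = Qᵀ Q`, the Gram matrix of the right inverse
  have hQ : Aᵀ * (Qᵀ * Q) = Q := by
    rw [← Matrix.mul_assoc, ← transpose_mul, hQA, Matrix.mul_assoc, hAQ, Matrix.mul_one]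
  have hinv : A * Aᵀ * (Qᵀ * Q) = 1 := by rw [Matrix.mul_assoc, hQ, hAQ]
  rw [inv_eq_right_inv hinv, hQ]

noncomputable def diffMatPinvExplicit (n : ℕ) : Matrix (Fin n) (Fin (n - 1)) ℝ :=
  of fun k j => if (k : ℕ) < j + 1 then ((j : ℝ) + 1 - n) / n else ((j : ℝ) + 1) / n

section

variable {n : ℕ}

lemma diffMat_row (i : Fin (n - 1)) :
    diffMat n i = Pi.single ⟨i + 1, by omega⟩ 1 - Pi.single ⟨i, by omega⟩ 1 := by
  ext j
  simp only [diffMat, Pi.sub_apply, Pi.single_apply, Fin.ext_iff]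
  split_ifs <;> first | omega | norm_num

lemma diffMat_col (k : Fin n) :
    (fun i => diffMat n i k) =
      (if h : 0 < (k : ℕ) then Pi.single ⟨k - 1, by omega⟩ 1 else 0) -
        (if h : (k : ℕ) < n - 1 then Pi.single ⟨k, h⟩ 1 else 0) := by
  ext i
  simp only [diffMat, Pi.sub_apply]
  have := i.isLt
  split_ifs <;> simp only [Pi.single_apply, Fin.ext_iff, Pi.zero_apply] <;> (try split_ifs) <;>
    first | omega | norm_num

lemma diffMat_mul_apply {α : Type*} (B : Matrix (Fin n) α ℝ) (i : Fin (n - 1)) (c : α) :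
    (diffMat n * B) i c = B ⟨i + 1, by omega⟩ c - B ⟨i, by omega⟩ c := by
  rw [mul_apply', diffMat_row, sub_dotProduct, single_dotProduct, single_dotProduct, one_mul,
    one_mul]

lemma mul_diffMat_apply {α : Type*} (B : Matrix α (Fin (n - 1)) ℝ) (r : α) (k : Fin n) :
    (B * diffMat n) r k =
      (if h : 0 < (k : ℕ) then B r ⟨k - 1, by omega⟩ else 0) -
        (if h : (k : ℕ) < n - 1 then B r ⟨k, h⟩ else 0) := by
  rw [mul_apply', diffMat_col, dotProduct_sub]
  split_ifs <;> simp [dotProduct_single]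

lemma diffMat_mul_diffMatPinvExplicit : diffMat n * diffMatPinvExplicit n = 1 := by
  ext i c
  have hn : (n : ℝ) ≠ 0 := Nat.cast_ne_zero.mpr (by have := i.pos; omega)
  rw [diffMat_mul_apply]
  simp only [diffMatPinvExplicit, of_apply, one_apply, Fin.ext_iff]
  split_ifs <;> first | omega | (field_simp; ring)

lemma diffMatPinvExplicit_mul_diffMat :
    diffMatPinvExplicit n * diffMat n = 1 - (n : ℝ)⁻¹ • of fun _ _ => 1 := by
  ext r ⟨k, hk⟩
  have hn : (n : ℝ) ≠ 0 := Nat.cast_ne_zero.mpr (by omega)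
  have hlast : ¬k < n - 1 → (n : ℝ) = k + 1 := fun h => by norm_cast; omega
  rw [mul_diffMat_apply]
  simp only [diffMatPinvExplicit, of_apply, Matrix.sub_apply, one_apply, Matrix.smul_apply,
    smul_eq_mul, Fin.ext_iff]
  rcases k with _ | k <;>
  · simp only [Nat.add_sub_cancel, Nat.cast_add, Nat.cast_one, Nat.cast_zero] at hlast ⊢
    split_ifs <;> first
      | omega
      | (field_simp; ring1)
      | (field_simp; linarith [hlast ‹_›])

lemma diffMatPinv_eq_explicit : diffMatPinv n = diffMatPinvExplicit n := by
  refine transpose_mul_inv_mul_transpose_eq_of_mul_eq_one diffMat_mul_diffMatPinvExplicit ?_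
  rw [diffMatPinvExplicit_mul_diffMat, transpose_sub, transpose_one, transpose_smul]
  rfl

lemma sum_sq_diffMatPinvExplicit (j : Fin (n - 1)) :
    ∑ k : Fin n, diffMatPinvExplicit n k j ^ 2 = ((j : ℝ) + 1) * (n - (j + 1)) / n := by
  have hj := j.isLt
  have hn : (n : ℝ) ≠ 0 := Nat.cast_ne_zero.mpr (by omega)
  have hcard : #{k : Fin n | (k : ℕ) < j + 1} = (j : ℕ) + 1 := by
    rw [Fin.card_filter_val_lt]; omega
  have hcard' : #{k : Fin n | ¬(k : ℕ) < j + 1} = n - (j + 1) := by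
    rw [filter_not, card_sdiff_of_subset (filter_subset _ _), hcard, card_univ,
      Fintype.card_fin]
  simp only [diffMatPinvExplicit, of_apply, ite_pow]
  rw [sum_ite, sum_const, sum_const, hcard, hcard', nsmul_eq_mul,
    nsmul_eq_mul, Nat.cast_sub (by omega)]
  push_cast
  field_simp
  ring

end

theorem diffMat_pinv_transpose_row_norm_general (n : ℕ) (j : Fin (n - 1)) :
    ∑ k : Fin n, ((diffMatPinv n)ᵀ j k) ^ 2 ≤ (n : ℝ) / 4 := by
  simp only [transpose_apply, diffMatPinv_eq_explicit, sum_sq_diffMatPinvExplicit]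
  have hn : (0 : ℝ) < n := Nat.cast_pos.mpr (by have := j.isLt; omega)
  rw [div_le_div_iff₀ hn (by norm_num)]
  linarith [four_mul_le_sq_add ((j : ℝ) + 1) (n - (j + 1))]

theorem diffMat_pinv_transpose_row_norm (n : ℕ) (hn : 2 ≤ n) (j : Fin (n - 1)) :
    ∑ k : Fin n, ((diffMatPinv n)ᵀ j k) ^ 2 ≤ (n : ℝ) / 4 :=
  diffMat_pinv_transpose_row_norm_general n j
end

section
/- Fix design points s₁,…,s_n ∈ [0,1] and nonnegative weights w₁(s'),…,w_n(s') summing to 1. Suppose η : [0,1] → [0,1] is twice differentiable with |η'| ≤ b₁ and |η''| ≤ b₂ uniformly. Let yᵢ be independent random variables with yᵢ ∈ {0,1} and E[yᵢ] = η(sᵢ), and set η̂(s') = ∑ᵢ wᵢ(s')yᵢ. Then E|η̂(s') - η(s')| ≤ b₁·∑ᵢ wᵢ(s')|s' - sᵢ| + (b₂/2)·∑ᵢ wᵢ(s')(s' - sᵢ)² + (1/2)·√(∑ᵢ wᵢ(s')²). -/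
/-!
Split `η̂(s') - η(s')` into the centred noise `η̂ - 𝔼 η̂` and the bias
`𝔼 η̂ - η(s') = ∑ wᵢ (η(sᵢ) - η(s'))`. By independence the noise has variance
`∑ wᵢ² Var yᵢ ≤ ∑ wᵢ² / 4` (Popoviciu, as `yᵢ ∈ [0, 1]`), and `𝔼|X| ≤ √(𝔼 X²)` turns this into
the square-root term. By the mean value theorem `|η(sᵢ) - η(s')| ≤ b₁ |s' - sᵢ|`, so the bias
already fits into the first term and the curvature term is slack: it is nonnegative since
`b₂ ≥ |η''(0)|`.
-/

open MeasureTheory ProbabilityTheory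

section Moments

variable {Ω : Type*} {mΩ : MeasurableSpace Ω} {μ : Measure Ω}

theorem integral_abs_le_sqrt_integral_sq [IsProbabilityMeasure μ] {X : Ω → ℝ} (hX : MemLp X 2 μ) :
    ∫ ω, |X ω| ∂μ ≤ √(∫ ω, X ω ^ 2 ∂μ) := by
  refine Real.le_sqrt_of_sq_le ?_
  have h := variance_nonneg |X| μ
  rw [variance_eq_sub hX.abs] at h
  simpa only [Pi.pow_apply, Pi.abs_apply, sq_abs, sub_nonneg] using h

theorem integral_abs_sub_le_sqrt_variance_add [IsProbabilityMeasure μ] {X : Ω → ℝ}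
    (hX : MemLp X 2 μ) (c : ℝ) :
    ∫ ω, |X ω - c| ∂μ ≤ √(Var[X; μ]) + |μ[X] - c| := by
  have hXint : Integrable X μ := hX.integrable one_le_two
  have hdev : Integrable (fun ω => |X ω - μ[X]|) μ := (hXint.sub (integrable_const _)).abs
  calc ∫ ω, |X ω - c| ∂μ ≤ ∫ ω, (|X ω - μ[X]| + |μ[X] - c|) ∂μ :=
        integral_mono (hXint.sub (integrable_const c)).abs (hdev.add (integrable_const _))
          fun ω => abs_sub_le _ _ _
    _ = ∫ ω, |X ω - μ[X]| ∂μ + |μ[X] - c| := by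
        rw [integral_add hdev (integrable_const _), integral_const, probReal_univ, one_smul]
    _ ≤ √(Var[X; μ]) + |μ[X] - c| := by
        gcongr
        rw [variance_eq_integral hX.aestronglyMeasurable.aemeasurable]
        exact integral_abs_le_sqrt_integral_sq (hX.sub (memLp_const _))

theorem ProbabilityTheory.iIndepFun.variance_sum_mul {ι : Type*} [Fintype ι] {Y : ι → Ω → ℝ}
    (hY : iIndepFun Y μ) (hY2 : ∀ i, MemLp (Y i) 2 μ) (w : ι → ℝ) :
    Var[fun ω => ∑ i, w i * Y i ω; μ] = ∑ i, w i ^ 2 * Var[Y i; μ] := by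
  have hsum : (fun ω => ∑ i, w i * Y i ω) = ∑ i, fun ω => w i * Y i ω := by
    ext ω; simp
  rw [hsum, IndepFun.variance_sum (fun i _ => (hY2 i).const_mul (w i))]
  · simp_rw [← variance_const_mul]
  · intro i _ j _ hij
    exact (hY.indepFun hij).comp (measurable_const_mul (w i)) (measurable_const_mul (w j))

theorem ProbabilityTheory.iIndepFun.variance_sum_mul_le_of_bounded [IsProbabilityMeasure μ]
    {ι : Type*} [Fintype ι] {Y : ι → Ω → ℝ} {a b : ℝ} (hY : iIndepFun Y μ)
    (hYm : ∀ i, AEMeasurable (Y i) μ) (hab : ∀ i, ∀ᵐ ω ∂μ, Y i ω ∈ Set.Icc a b) (w : ι → ℝ) :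
    Var[fun ω => ∑ i, w i * Y i ω; μ] ≤ ((b - a) / 2) ^ 2 * ∑ i, w i ^ 2 := by
  rw [hY.variance_sum_mul (fun i => memLp_of_bounded (hab i) (hYm i).aestronglyMeasurable 2),
    Finset.mul_sum]
  refine Finset.sum_le_sum fun i _ => ?_
  rw [mul_comm (((b - a) / 2) ^ 2)]
  exact mul_le_mul_of_nonneg_left (variance_le_sq_of_bounded (hab i) (hYm i)) (sq_nonneg _)

end Moments

theorem abs_sum_mul_sub_le {ι : Type*} {t : Finset ι} {w : ι → ℝ} (hw : ∀ i ∈ t, 0 ≤ w i)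
    (hw1 : ∑ i ∈ t, w i = 1) (a : ι → ℝ) (c : ℝ) :
    |∑ i ∈ t, w i * a i - c| ≤ ∑ i ∈ t, w i * |a i - c| := by
  have : ∑ i ∈ t, w i * a i - c = ∑ i ∈ t, w i * (a i - c) := by
    simp_rw [mul_sub, Finset.sum_sub_distrib, ← Finset.sum_mul, hw1, one_mul]
  rw [this]
  refine (Finset.abs_sum_le_sum_abs _ _).trans_eq (Finset.sum_congr rfl fun i hi => ?_)
  rw [abs_mul, abs_of_nonneg (hw i hi)]

theorem abs_sum_mul_sub_le_of_abs_deriv_le {ι : Type*} {t : Finset ι} {w x : ι → ℝ}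
    (hw : ∀ i ∈ t, 0 ≤ w i) (hw1 : ∑ i ∈ t, w i = 1) {f : ℝ → ℝ} {S : Set ℝ} {C c : ℝ}
    (hS : Convex ℝ S) (hf : ∀ z ∈ S, DifferentiableAt ℝ f z) (hf' : ∀ z ∈ S, |deriv f z| ≤ C)
    (hx : ∀ i ∈ t, x i ∈ S) (hc : c ∈ S) :
    |∑ i ∈ t, w i * f (x i) - f c| ≤ C * ∑ i ∈ t, w i * |c - x i| := by
  refine (abs_sum_mul_sub_le hw hw1 _ _).trans ?_
  rw [Finset.mul_sum]
  refine Finset.sum_le_sum fun i hi => ?_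
  rw [mul_left_comm, abs_sub_comm c]
  exact mul_le_mul_of_nonneg_left
    (hS.norm_image_sub_le_of_norm_deriv_le hf hf' hc (hx i hi)) (hw i hi)

theorem nadaraya_watson_smoothing_error_general
    {Ω : Type*} [MeasureSpace Ω] (hP : IsProbabilityMeasure (ℙ : Measure Ω))
    (n : ℕ) (s : Fin n → ℝ) (hsIn : ∀ i, s i ∈ Set.Icc (0:ℝ) 1)
    (s' : ℝ) (hs' : s' ∈ Set.Icc (0:ℝ) 1)
    (w : Fin n → ℝ) (hw : ∀ i, 0 ≤ w i) (hw1 : ∑ i, w i = 1)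
    (η : ℝ → ℝ) (hη : ContDiff ℝ 2 η)
    (b₁ b₂ : ℝ)
    (hb₁ : ∀ x ∈ Set.Icc (0:ℝ) 1, |deriv η x| ≤ b₁)
    (hb₂ : ∀ x ∈ Set.Icc (0:ℝ) 1, |deriv (deriv η) x| ≤ b₂)
    (y : Fin n → Ω → ℝ) (hmeas : ∀ i, Measurable (y i))
    (hindep : iIndepFun y ℙ)
    (hval : ∀ i, ∀ᵐ ω : Ω, y i ω = 0 ∨ y i ω = 1)
    (hmean : ∀ i, (∫ ω, y i ω) = η (s i)) :
    (∫ ω, |(∑ i, w i * y i ω) - η s'|)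
      ≤ b₁ * ∑ i, w i * |s' - s i| + (b₂ / 2) * ∑ i, w i * (s' - s i) ^ 2
          + (1 / 2) * Real.sqrt (∑ i, (w i) ^ 2) := by
  have hy01 (i : Fin n) : ∀ᵐ ω, y i ω ∈ Set.Icc (0:ℝ) 1 := by
    filter_upwards [hval i] with ω hω
    rcases hω with hω | hω <;> simp [hω]
  have hy2 (i : Fin n) : MemLp (y i) 2 :=
    memLp_of_bounded (hy01 i) (hmeas i).aestronglyMeasurable 2
  have hZmean : ∫ ω, ∑ i, w i * y i ω = ∑ i, w i * η (s i) := by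
    rw [integral_finsetSum _ fun i _ => ((hy2 i).integrable one_le_two).const_mul (w i)]
    simp_rw [integral_const_mul, hmean]
  have hnoise : √(Var[fun ω => ∑ i, w i * y i ω; ℙ]) ≤ (1 / 2) * √(∑ i, w i ^ 2) := by
    have hvar := hindep.variance_sum_mul_le_of_bounded (fun i => (hmeas i).aemeasurable) hy01 w
    rw [← Real.sqrt_sq (show (0:ℝ) ≤ 1 / 2 by norm_num), ← Real.sqrt_mul (by norm_num)]
    exact Real.sqrt_le_sqrt (by simpa using hvar)
  have hbias : |∑ i, w i * η (s i) - η s'| ≤ b₁ * ∑ i, w i * |s' - s i| :=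
    abs_sum_mul_sub_le_of_abs_deriv_le (fun i _ => hw i) hw1 (convex_Icc 0 1)
      (fun z _ => hη.differentiable two_ne_zero z) hb₁ (fun i _ => hsIn i) hs'
  have hcurv : 0 ≤ (b₂ / 2) * ∑ i, w i * (s' - s i) ^ 2 := by
    have hb₂ : 0 ≤ b₂ := (abs_nonneg _).trans (hb₂ 0 (Set.left_mem_Icc.2 zero_le_one))
    exact mul_nonneg (by positivity) (Finset.sum_nonneg fun i _ => mul_nonneg (hw i) (sq_nonneg _))
  have hsplit := integral_abs_sub_le_sqrt_variance_add
    (memLp_finsetSum Finset.univ fun i _ => (hy2 i).const_mul (w i)) (η s')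
  rw [hZmean] at hsplit
  linarith

theorem nadaraya_watson_smoothing_error
    {Ω : Type*} [MeasureSpace Ω] (hP : IsProbabilityMeasure (ℙ : Measure Ω))
    (n : ℕ) (s : Fin n → ℝ) (hsIn : ∀ i, s i ∈ Set.Icc (0:ℝ) 1)
    (s' : ℝ) (hs' : s' ∈ Set.Icc (0:ℝ) 1)
    (w : Fin n → ℝ) (hw : ∀ i, 0 ≤ w i) (hw1 : ∑ i, w i = 1)
    (η : ℝ → ℝ) (hη : ContDiff ℝ 2 η)
    (hηb : ∀ x ∈ Set.Icc (0:ℝ) 1, η x ∈ Set.Icc (0:ℝ) 1)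
    (b₁ b₂ : ℝ)
    (hb₁ : ∀ x ∈ Set.Icc (0:ℝ) 1, |deriv η x| ≤ b₁)
    (hb₂ : ∀ x ∈ Set.Icc (0:ℝ) 1, |deriv (deriv η) x| ≤ b₂)
    (y : Fin n → Ω → ℝ) (hmeas : ∀ i, Measurable (y i))
    (hindep : iIndepFun y ℙ)
    (hval : ∀ i, ∀ᵐ ω : Ω, y i ω = 0 ∨ y i ω = 1)
    (hmean : ∀ i, (∫ ω, y i ω) = η (s i)) :
    (∫ ω, |(∑ i, w i * y i ω) - η s'|)
      ≤ b₁ * ∑ i, w i * |s' - s i| + (b₂ / 2) * ∑ i, w i * (s' - s i) ^ 2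
          + (1 / 2) * Real.sqrt (∑ i, (w i) ^ 2) :=
  nadaraya_watson_smoothing_error_general hP n s hsIn s' hs' w hw hw1 η hη b₁ b₂ hb₁ hb₂ y hmeas
    hindep hval hmean
end
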